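/- arXiv:2308.10259 — 8 statements merged into one kernel-verified Lean document; each statement's English description precedes it below -/
import Mathlib

section
/- Let T be an n×n substochastic matrix (entrywise nonnegative with each row sum at most 1) whose spectral radius is strictly less than 1. Then trace((I−T)^{−1}) ≥ Σ_{k=1}^n 1/(1−t_{kk}). -/
/-!
Since `1` is not a root of the characteristic polynomial, `X := (1 - T)⁻¹` exists. The powers of
a substochastic matrix have entries in `[0, 1]`, so the partial Neumann sums
`∑_{m < N} T ^ m = X - X * T ^ N` are entrywise nonnegative, nondecreasing and bounded; hence
`T ^ N → 0` and `X` is their limit, so `X ≥ 0`. Reading the diagonal of `X * (1 - T) = 1`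
gives `1 = X k k - ∑ j, X k j * T j k ≤ X k k * (1 - T k k)`, i.e. `(1 - T k k)⁻¹ ≤ X k k`;
summing over `k` gives the trace bound.
-/

open Finset Matrix Filter Topology

namespace Matrix

section Semiring

variable {R n : Type*} [Fintype n] [DecidableEq n]
  [Semiring R] [PartialOrder R] [IsOrderedRing R] {M : Matrix n n R}

def rowSubstochastic (R n : Type*) [Fintype n] [DecidableEq n] [Semiring R] [PartialOrder R]
    [IsOrderedRing R] : Submonoid (Matrix n n R) where
  carrier := {M | (∀ i j, 0 ≤ M i j) ∧ ∀ i, ∑ j, M i j ≤ 1}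
  mul_mem' {M N} hM hN := by
    refine ⟨fun i j => sum_nonneg fun k _ => mul_nonneg (hM.1 i k) (hN.1 k j), fun i => ?_⟩
    calc ∑ j, (M * N) i j = ∑ k, M i k * ∑ j, N k j := by
          simp_rw [mul_apply, mul_sum]
          exact sum_comm
      _ ≤ ∑ k, M i k := sum_le_sum fun k _ => mul_le_of_le_one_right (hM.1 i k) (hN.2 k)
      _ ≤ 1 := hM.2 i
  one_mem' := ⟨fun i j => by rw [one_apply]; split_ifs <;> simp, fun i => by simp [one_apply]⟩

lemma mem_rowSubstochastic :
    M ∈ rowSubstochastic R n ↔ (∀ i j, 0 ≤ M i j) ∧ ∀ i, ∑ j, M i j ≤ 1 :=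
  Iff.rfl

lemma nonneg_of_mem_rowSubstochastic (hM : M ∈ rowSubstochastic R n) (i j : n) : 0 ≤ M i j :=
  hM.1 i j

lemma le_one_of_mem_rowSubstochastic (hM : M ∈ rowSubstochastic R n) (i j : n) : M i j ≤ 1 :=
  (single_le_sum (fun k _ => hM.1 i k) (mem_univ j)).trans (hM.2 i)

end Semiring

section Real

variable {n : Type*} [Fintype n] [DecidableEq n] {T : Matrix n n ℝ}

lemma isUnit_det_one_sub_of_forall_root_norm_lt_one
    (h : ∀ z ∈ (T.map Complex.ofReal).charpoly.roots, ‖z‖ < 1) : IsUnit (1 - T).det := by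
  rw [isUnit_iff_ne_zero]
  intro hdet
  have hroot : (1 : ℂ) ∈ (T.map Complex.ofRealHom).charpoly.roots := by
    rw [Polynomial.mem_roots (charpoly_monic _).ne_zero, Polynomial.IsRoot, charpoly_map,
      Polynomial.eval_one_map, eval_charpoly, map_one, hdet, map_zero]
  simpa using h 1 hroot

lemma sum_range_pow_eq_inv_one_sub_mul (hdet : IsUnit (1 - T).det) (N : ℕ) :
    ∑ m ∈ range N, T ^ m = (1 - T)⁻¹ - (1 - T)⁻¹ * T ^ N := by
  rw [← mul_one_sub, ← mul_neg_geom_sum, ← mul_assoc, nonsing_inv_mul _ hdet, one_mul]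

lemma tendsto_pow_of_mem_rowSubstochastic (hT : T ∈ rowSubstochastic ℝ n)
    (hdet : IsUnit (1 - T).det) : Tendsto (T ^ ·) atTop (𝓝 0) := by
  set X := (1 - T)⁻¹
  refine tendsto_pi_nhds.2 fun i => tendsto_pi_nhds.2 fun j => ?_
  have hbound : ∀ N, -∑ k, |X i k| ≤ (X * T ^ N) i j := fun N => by
    rw [mul_apply, ← sum_neg_distrib]
    refine sum_le_sum fun k _ => ?_
    have h0 := nonneg_of_mem_rowSubstochastic (pow_mem hT N) k j
    have h1 := le_one_of_mem_rowSubstochastic (pow_mem hT N) k j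
    nlinarith [neg_abs_le (X i k), abs_nonneg (X i k)]
  refine Summable.tendsto_atTop_zero <| summable_of_sum_range_le (c := X i j + ∑ k, |X i k|)
    (fun m => nonneg_of_mem_rowSubstochastic (pow_mem hT m) i j) fun N => ?_
  have hN := congrFun₂ (sum_range_pow_eq_inv_one_sub_mul hdet N) i j
  rw [sum_apply, sub_apply] at hN
  linarith [hbound N]

lemma inv_one_sub_nonneg_of_mem_rowSubstochastic (hT : T ∈ rowSubstochastic ℝ n)
    (hdet : IsUnit (1 - T).det) (i j : n) : 0 ≤ (1 - T)⁻¹ i j := by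
  have hlim : Tendsto (fun N => ∑ m ∈ range N, T ^ m) atTop (𝓝 (1 - T)⁻¹) := by
    simp_rw [sum_range_pow_eq_inv_one_sub_mul hdet]
    simpa using tendsto_const_nhds.sub
      (tendsto_const_nhds.mul (tendsto_pow_of_mem_rowSubstochastic hT hdet))
  refine ge_of_tendsto' (((continuous_apply j).comp (continuous_apply i)).tendsto _ |>.comp hlim)
    fun N => ?_
  change 0 ≤ (∑ m ∈ range N, T ^ m) i j
  rw [sum_apply]
  exact sum_nonneg fun m _ => nonneg_of_mem_rowSubstochastic (pow_mem hT m) i j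

end Real

lemma inv_one_sub_apply_self_le {n 𝕜 : Type*} [Fintype n] [DecidableEq n] [Field 𝕜]
    [LinearOrder 𝕜] [IsStrictOrderedRing 𝕜] {T X : Matrix n n 𝕜}
    (hX : ∀ i j, 0 ≤ X i j) (hT : ∀ i j, 0 ≤ T i j) (hXT : X * (1 - T) = 1) (k : n) :
    (1 - T k k)⁻¹ ≤ X k k := by
  have h1 : 1 ≤ X k k * (1 - T k k) :=
    calc 1 = X k k - ∑ j, X k j * T j k := by
          have hkk := congrFun₂ hXT k k
          rw [mul_sub, mul_one, sub_apply, mul_apply, one_apply_eq] at hkk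
          exact hkk.symm
      _ ≤ X k k - X k k * T k k := by
          gcongr
          exact single_le_sum (f := fun j => X k j * T j k)
            (fun j _ => mul_nonneg (hX k j) (hT j k)) (mem_univ k)
      _ = X k k * (1 - T k k) := by ring
  have hpos : 0 < 1 - T k k := pos_of_mul_pos_right (one_pos.trans_le h1) (hX k k)
  exact (inv_le_iff_one_le_mul₀ hpos).2 h1

end Matrix

theorem substochastic_trace_inv_ge
    (n : ℕ) (T : Matrix (Fin n) (Fin n) ℝ)
    (hnn : ∀ i j, 0 ≤ T i j)
    (hrow : ∀ i, ∑ j, T i j ≤ 1)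
    (hspec : ∀ z ∈ (Matrix.charpoly (T.map (Complex.ofReal))).roots, ‖z‖ < 1) :
    ∑ k, (1 - T k k)⁻¹ ≤ Matrix.trace (1 - T)⁻¹ := by
  have hdet : IsUnit (1 - T).det := isUnit_det_one_sub_of_forall_root_norm_lt_one hspec
  have hT : T ∈ rowSubstochastic ℝ (Fin n) := mem_rowSubstochastic.2 ⟨hnn, hrow⟩
  exact sum_le_sum fun k _ => inv_one_sub_apply_self_le
    (inv_one_sub_nonneg_of_mem_rowSubstochastic hT hdet) hnn (nonsing_inv_mul _ hdet) k
end

section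
/- Let n ≥ 2 and x_1, ..., x_n > 0. For each k with 1 ≤ k ≤ n define s_k = ((Σ_{j=1}^k x_j)^2 − Σ_{j=1}^k x_j^2)/(2 Σ_{j=1}^k x_j) + Σ_{j=k+1}^n x_j. Then s_1 > s_2 > ... > s_n, i.e., s_k > s_{k+1} for all 1 ≤ k ≤ n−1. -/
open Finset

/-- With `P = S² - Q`, the difference of the two sides is `P a / (2 S (S + a)) + a² / (S + a) > 0`. -/
lemma sq_sub_div_two_mul_add_lt {S Q a : ℝ} (hS : 0 < S) (ha : 0 < a) (hQ : Q ≤ S ^ 2) :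
    ((S + a) ^ 2 - (Q + a ^ 2)) / (2 * (S + a)) < (S ^ 2 - Q) / (2 * S) + a := by
  have hSa : 0 < S + a := by positivity
  rw [div_add' _ _ _ (by positivity), div_lt_div_iff₀ (by positivity) (by positivity)]
  nlinarith [mul_nonneg (mul_nonneg ha.le hSa.le) (sub_nonneg.mpr hQ), mul_pos (mul_pos ha ha) hS]

theorem sk_strict_decreasing_general
    (n : ℕ) (x : ℕ → ℝ)
    (hx : ∀ j, 1 ≤ j → j ≤ n → 0 < x j)
    (s : ℕ → ℝ)
    (hs : ∀ k, s k =
      ((∑ j ∈ Finset.Icc 1 k, x j) ^ 2 - ∑ j ∈ Finset.Icc 1 k, (x j) ^ 2) /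
        (2 * ∑ j ∈ Finset.Icc 1 k, x j) +
      ∑ j ∈ Finset.Icc (k + 1) n, x j) :
    ∀ k, 1 ≤ k → k ≤ n - 1 → s (k + 1) < s k := by
  intro k hk hkn
  have hpos : ∀ j ∈ Icc 1 k, 0 < x j := fun j hj ↦ by
    have := mem_Icc.mp hj
    exact hx j this.1 (by omega)
  have hS : 0 < ∑ j ∈ Icc 1 k, x j := sum_pos hpos ⟨1, mem_Icc.mpr ⟨le_rfl, hk⟩⟩
  have hQ : ∑ j ∈ Icc 1 k, x j ^ 2 ≤ (∑ j ∈ Icc 1 k, x j) ^ 2 :=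
    sum_sq_le_sq_sum_of_nonneg fun j hj ↦ (hpos j hj).le
  have step := sq_sub_div_two_mul_add_lt hS (hx (k + 1) (by omega) (by omega)) hQ
  rw [hs, hs, sum_Icc_succ_top (by omega), sum_Icc_succ_top (by omega),
    ← add_sum_Ioc_eq_sum_Icc (by omega : k + 1 ≤ n), ← Icc_add_one_left_eq_Ioc]
  linarith

theorem sk_strict_decreasing
    (n : ℕ) (hn : 2 ≤ n) (x : ℕ → ℝ)
    (hx : ∀ j, 1 ≤ j → j ≤ n → 0 < x j)
    (s : ℕ → ℝ)
    (hs : ∀ k, s k =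
      ((∑ j ∈ Finset.Icc 1 k, x j) ^ 2 - ∑ j ∈ Finset.Icc 1 k, (x j) ^ 2) /
        (2 * ∑ j ∈ Finset.Icc 1 k, x j) +
      ∑ j ∈ Finset.Icc (k + 1) n, x j) :
    ∀ k, 1 ≤ k → k ≤ n - 1 → s (k + 1) < s k :=
  sk_strict_decreasing_general n x hx s hs
end

section
/- Let d_1, ..., d_n ∈ [0,1), let D = diag(d_1,...,d_n), and let C be the adjacency matrix of the directed n-cycle 1→2→...→n→1 (i.e., the cyclic permutation matrix). Let T = D + (I−D)C. Then T is stochastic, 1 is an algebraically simple eigenvalue of T, and Kemeny's constant of T equals (1/(2 Σ_{j=1}^n 1/(1−d_j))) · ((Σ_{j=1}^n 1/(1−d_j))^2 − Σ_{j=1}^n 1/(1−d_j)^2). -/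
open Finset Matrix

/-- A matrix is (row) stochastic: entrywise nonnegative with all row sums one. -/
def IsStochastic {n : ℕ} (T : Matrix (Fin n) (Fin n) ℝ) : Prop :=
  (∀ i j, 0 ≤ T i j) ∧ ∀ i, ∑ j, T i j = 1

/-- Kemeny's constant: `∑_{λ ≠ 1} 1/(1-λ)` over the complex eigenvalues of `T`
(roots of the characteristic polynomial, with multiplicity, with one copy of the
eigenvalue 1 removed). -/
noncomputable def kemeny {n : ℕ} (T : Matrix (Fin n) (Fin n) ℝ) : ℝ :=
  ((((Matrix.charpoly (T.map (Complex.ofReal))).roots.erase 1).map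
      (fun z => (1 - z)⁻¹)).sum).re

/-!
The matrix `X - T` vanishes off the diagonal and the cyclic superdiagonal, so only the identity
and the `n`-cycle contribute to its determinant: `χ_T = Q - Q(1)` with `Q = ∏ (X - d_j)`.
Hence `χ_T(1) = 0`, and logarithmic differentiation of `Q` gives `χ_T'(1) = Q(1) S₁` and
`χ_T''(1) = Q(1) (S₁² - S₂)`, where `S_k = ∑ (1 - d_j)⁻ᵏ > 0`. So `1` is a simple root, and
writing `χ_T = (X - 1) q`, Kemeny's constant is `q'(1) / q(1) = χ_T''(1) / (2 χ_T'(1))`.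
-/

open Fin.NatCast Fin.CommRing in
theorem Equiv.Perm.eq_one_or_eq_finRotate {n : ℕ} [NeZero n] (σ : Equiv.Perm (Fin n))
    (h : ∀ i, σ i = i ∨ σ i = i + 1) : σ = 1 ∨ σ = finRotate n := by
  set S := univ.filter fun i => σ i ≠ i
  -- Each `σ i - i` is `0` or `1`, and they add up to `0` in `Fin n`.
  have hS : n ∣ #S := by
    rw [← Fin.natCast_eq_zero]
    calc ((#S : ℕ) : Fin n) = ∑ i, (σ i - i) := by
          rw [card_filter, Nat.cast_sum]
          refine sum_congr rfl fun i _ => ?_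
          rcases h i with hi | hi <;> by_cases hne : σ i = i <;> simp_all
      _ = 0 := by rw [sum_sub_distrib, Equiv.sum_comp σ (fun i => i), sub_self]
  rcases (card_le_univ S).lt_or_eq with hlt | heq
  · left
    have hS0 : S = ∅ := card_eq_zero.mp (Nat.eq_zero_of_dvd_of_lt hS (by simpa using hlt))
    ext i
    have hi : σ i = i := by simpa [S] using eq_empty_iff_forall_notMem.mp hS0 i
    rw [hi, Perm.one_apply]
  · right
    have hi : ∀ i, σ i ≠ i := by simpa [S] using eq_univ_of_card S heq
    ext i
    rw [(h i).resolve_left (hi i), finRotate_apply]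

theorem Matrix.det_of_cyclic_bidiagonal {R : Type*} [CommRing R] {n : ℕ} [NeZero n] (hn : 2 ≤ n)
    (A : Matrix (Fin n) (Fin n) R) (hA : ∀ i j, j ≠ i → j ≠ i + 1 → A i j = 0) :
    A.det = ∏ i, A i i + (-1) ^ (n - 1) * ∏ i, A i (i + 1) := by
  have hrot : (1 : Equiv.Perm (Fin n)) ≠ finRotate n := fun h => by
    have := congrArg (· 0) h
    simp [finRotate_apply] at this
    omega
  rw [← det_transpose, det_apply', ← sum_subset (subset_univ {1, finRotate n}), sum_pair hrot]
  · simp [sign_finRotate, finRotate_apply]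
  · intro σ _ hσ
    obtain ⟨i, hi, hi'⟩ : ∃ i, σ i ≠ i ∧ σ i ≠ i + 1 := by
      by_contra! h
      rcases σ.eq_one_or_eq_finRotate fun i => or_iff_not_imp_left.mpr (h i) with rfl | rfl <;>
        simp at hσ
    exact mul_eq_zero_of_right _ (prod_eq_zero (mem_univ i) (hA i (σ i) hi hi'))

open Polynomial

theorem Matrix.charpoly_of_cyclic_bidiagonal {R : Type*} [CommRing R] {n : ℕ} [NeZero n]
    (hn : 2 ≤ n) (A : Matrix (Fin n) (Fin n) R) (hA : ∀ i j, j ≠ i → j ≠ i + 1 → A i j = 0) :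
    A.charpoly = ∏ i, (X - C (A i i)) - C (∏ i, A i (i + 1)) := by
  have hsucc : ∀ i : Fin n, i ≠ i + 1 := fun i h => by
    have := congrArg Fin.val (left_eq_add.mp h)
    simp at this
    omega
  rw [charpoly, det_of_cyclic_bidiagonal hn]
  · simp only [charmatrix_apply_eq, charmatrix_apply_ne _ _ _ (hsucc _), prod_neg, map_prod]
    rw [← mul_assoc, ← pow_add, card_univ, Fintype.card_fin, Odd.neg_one_pow ⟨n - 1, by omega⟩]
    ring
  · intro i j hji hji'
    rw [charmatrix_apply_ne _ _ _ hji.symm, hA i j hji hji', map_zero, neg_zero]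

theorem Polynomial.derivative_X_sub_C_mul {R : Type*} [CommRing R] (a : R) (q : R[X]) :
    derivative ((X - C a) * q) = q + (X - C a) * derivative q := by
  simp [derivative_mul]

theorem Polynomial.derivative_derivative_X_sub_C_mul {R : Type*} [CommRing R] (a : R) (q : R[X]) :
    derivative (derivative ((X - C a) * q)) =
      2 * derivative q + (X - C a) * derivative (derivative q) := by
  rw [derivative_X_sub_C_mul, derivative_add, derivative_X_sub_C_mul]
  ring

theorem Polynomial.count_roots_eq_one {R : Type*} [CommRing R] [IsDomain R] [DecidableEq R]
    {p : R[X]} {t : R} (ht : p.IsRoot t) (ht' : (derivative p).eval t ≠ 0) :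
    p.roots.count t = 1 := by
  have hp0 : p ≠ 0 := by rintro rfl; simp at ht'
  rw [count_roots]
  refine le_antisymm ?_ ((rootMultiplicity_pos hp0).mpr ht)
  exact not_lt.mp fun h => ht' ((one_lt_rootMultiplicity_iff_isRoot hp0).mp h).2

section Field

variable {K : Type*} [Field K]

theorem Polynomial.eval_derivative_multiset_prod_X_sub_C {s : Multiset K} {x : K} (hx : x ∉ s) :
    (derivative (s.map (X - C ·)).prod).eval x =
      (s.map (X - C ·)).prod.eval x * (s.map fun a => (x - a)⁻¹).sum := by
  induction s using Multiset.induction_on with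
  | empty => simp
  | cons a s ih =>
    have ha : x - a ≠ 0 := sub_ne_zero.mpr fun h => hx (h ▸ Multiset.mem_cons_self x s)
    simp only [Multiset.map_cons, Multiset.prod_cons, Multiset.sum_cons, derivative_X_sub_C_mul,
      eval_add, eval_mul, eval_sub, eval_X, eval_C, ih (fun h => hx (Multiset.mem_cons_of_mem h))]
    field_simp

theorem Polynomial.eval_derivative_derivative_multiset_prod_X_sub_C {s : Multiset K} {x : K}
    (hx : x ∉ s) :
    (derivative (derivative (s.map (X - C ·)).prod)).eval x =
      (s.map (X - C ·)).prod.eval x *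
        ((s.map fun a => (x - a)⁻¹).sum ^ 2 - (s.map fun a => (x - a)⁻¹ ^ 2).sum) := by
  induction s using Multiset.induction_on with
  | empty => simp
  | cons a s ih =>
    have ha : x - a ≠ 0 := sub_ne_zero.mpr fun h => hx (h ▸ Multiset.mem_cons_self x s)
    have hs : x ∉ s := fun h => hx (Multiset.mem_cons_of_mem h)
    simp only [Multiset.map_cons, Multiset.prod_cons, Multiset.sum_cons,
      derivative_derivative_X_sub_C_mul, eval_add, eval_mul, eval_sub, eval_X, eval_C, eval_ofNat,
      ih hs, eval_derivative_multiset_prod_X_sub_C hs]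
    field_simp
    ring

theorem Polynomial.sum_inv_sub_roots_erase_mul [DecidableEq K] {p : K[X]} (hp : p.Splits)
    {t : K} (ht : p.IsRoot t) (ht' : (derivative p).eval t ≠ 0) :
    ((p.roots.erase t).map fun z => (t - z)⁻¹).sum * (2 * (derivative p).eval t) =
      (derivative (derivative p)).eval t := by
  have hp0 : p ≠ 0 := by rintro rfl; simp at ht'
  set q := ((p.roots.erase t).map (X - C ·)).prod
  set c := p.leadingCoeff
  have htq : t ∉ p.roots.erase t := by
    rw [← Multiset.count_eq_zero, Multiset.count_erase_self, count_roots_eq_one ht ht']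
  have hfac : p = C c * ((X - C t) * q) := by
    conv_lhs => rw [hp.eq_prod_roots, ← Multiset.cons_erase ((mem_roots hp0).mpr ht)]
    simp [q, c]
  have hp' : (derivative p).eval t = c * q.eval t := by
    rw [hfac, derivative_C_mul, derivative_X_sub_C_mul]
    simp
  have hp'' : (derivative (derivative p)).eval t = c * (2 * (derivative q).eval t) := by
    rw [hfac, derivative_C_mul, derivative_C_mul, derivative_derivative_X_sub_C_mul]
    simp
  rw [hp', hp'', eval_derivative_multiset_prod_X_sub_C htq]
  ring

theorem Polynomial.roots_prod_X_sub_C_sub_C_prod [IsAlgClosed K] [DecidableEq K] {ι : Type*}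
    (s : Finset ι) (f : ι → K) {t : K} (hf : ∀ i ∈ s, f i ≠ t)
    (hS : ∑ i ∈ s, (t - f i)⁻¹ ≠ 0) {p : K[X]}
    (hp : p = ∏ i ∈ s, (X - C (f i)) - C (∏ i ∈ s, (t - f i))) :
    p.roots.count t = 1 ∧
      ((p.roots.erase t).map fun z => (t - z)⁻¹).sum * (2 * ∑ i ∈ s, (t - f i)⁻¹) =
        (∑ i ∈ s, (t - f i)⁻¹) ^ 2 - ∑ i ∈ s, (t - f i)⁻¹ ^ 2 := by
  set m := s.val.map f
  have hm : t ∉ m := by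
    simp only [m, Multiset.mem_map, not_exists, not_and]
    exact hf
  have hQ : ∏ i ∈ s, (X - C (f i)) = (m.map (X - C ·)).prod := by
    simp [m, Multiset.map_map]
  have hQt : ∏ i ∈ s, (t - f i) = (m.map (X - C ·)).prod.eval t := by
    simp [← hQ, eval_prod]
  have hSm : ∀ g : K → K, ∑ i ∈ s, g (t - f i) = (m.map fun a => g (t - a)).sum := by
    simp [m, Multiset.map_map]
  have hQt0 : (m.map (X - C ·)).prod.eval t ≠ 0 := by
    rw [← hQt]
    exact prod_ne_zero_iff.mpr fun i hi => sub_ne_zero.mpr (hf i hi).symm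
  have hroot : p.IsRoot t := by simp [hp, hQ, hQt]
  have hp' : derivative p = derivative (m.map (X - C ·)).prod := by
    rw [hp, hQ, derivative_sub, derivative_C, sub_zero]
  have hp't : (derivative p).eval t ≠ 0 := by
    rw [hp', eval_derivative_multiset_prod_X_sub_C hm, ← hSm (·⁻¹)]
    exact mul_ne_zero hQt0 hS
  have hsum := sum_inv_sub_roots_erase_mul (IsAlgClosed.splits p) hroot hp't
  refine ⟨count_roots_eq_one hroot hp't, mul_left_cancel₀ hQt0 ?_⟩
  rw [hp', eval_derivative_multiset_prod_X_sub_C hm,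
    eval_derivative_derivative_multiset_prod_X_sub_C hm] at hsum
  rw [hSm (·⁻¹), hSm (·⁻¹ ^ 2)]
  linear_combination hsum

end Field

theorem Matrix.diagonal_add_one_sub_diagonal_mul_apply {R : Type*} [CommRing R] {n : ℕ}
    (d : Fin n → R) (P : Matrix (Fin n) (Fin n) R) (i j : Fin n) :
    (diagonal d + (1 - diagonal d) * P) i j = diagonal d i j + (1 - d i) * P i j := by
  simp [diagonal_mul, sub_eq_add_neg, add_mul]

theorem IsStochastic.diagonal_add_one_sub_diagonal_mul {n : ℕ} {P : Matrix (Fin n) (Fin n) ℝ}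
    (hP : IsStochastic P) {d : Fin n → ℝ} (hd : ∀ j, 0 ≤ d j ∧ d j ≤ 1) :
    IsStochastic (diagonal d + (1 - diagonal d) * P) := by
  refine ⟨fun i j => ?_, fun i => ?_⟩
  · rw [diagonal_add_one_sub_diagonal_mul_apply]
    have hdiag : 0 ≤ diagonal d i j := by
      by_cases h : i = j
      · simpa [h] using (hd j).1
      · simp [h]
    nlinarith [hd i, hP.1 i j]
  · simp_rw [diagonal_add_one_sub_diagonal_mul_apply, sum_add_distrib, ← mul_sum, hP.2 i]
    simp [diagonal_apply]

theorem Matrix.charpoly_diagonal_add_one_sub_diagonal_mul_cycle {R : Type*} [CommRing R] {n : ℕ}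
    [NeZero n] (d : Fin n → R) (P : Matrix (Fin n) (Fin n) R)
    (hP : ∀ i j : Fin n, P i j = if j = i + 1 then 1 else 0) :
    (diagonal d + (1 - diagonal d) * P).charpoly = ∏ i, (X - C (d i)) - C (∏ i, (1 - d i)) := by
  have hentry : ∀ i j, (diagonal d + (1 - diagonal d) * P) i j =
      (if j = i then d i else 0) + if j = i + 1 then 1 - d i else 0 := by
    intro i j
    simp only [diagonal_add_one_sub_diagonal_mul_apply, hP, diagonal_apply, eq_comm (a := i)]
    split_ifs <;> ring
  obtain hn | hn := (Nat.one_le_iff_ne_zero.mpr (NeZero.ne n)).eq_or_lt'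
  · subst hn
    rw [charpoly, det_unique, charmatrix_apply_eq, hentry]
    simp
  · rw [charpoly_of_cyclic_bidiagonal hn]
    · simp [hentry, hn.ne']
    · intro i j hji hji'
      simp [hentry, hji, hji']

theorem kemeny_diag_plus_cycle
    (n : ℕ) [NeZero n] (d : Fin n → ℝ) (hd : ∀ j, 0 ≤ d j ∧ d j < 1)
    (C : Matrix (Fin n) (Fin n) ℝ)
    (hC : ∀ i j : Fin n, C i j = if j = i + 1 then 1 else 0)
    (T : Matrix (Fin n) (Fin n) ℝ)
    (hT : T = Matrix.diagonal d + (1 - Matrix.diagonal d) * C) :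
    IsStochastic T ∧
    (Matrix.charpoly (T.map (Complex.ofReal))).roots.count 1 = 1 ∧
    kemeny T = (1 / (2 * ∑ j, (1 - d j)⁻¹)) *
      ((∑ j, (1 - d j)⁻¹) ^ 2 - ∑ j, ((1 - d j)⁻¹) ^ 2) := by
  subst hT
  have hcycle : IsStochastic C :=
    ⟨fun i j => by rw [hC]; split_ifs <;> norm_num, fun i => by simp [hC]⟩
  have hsum_pos : 0 < ∑ j, (1 - d j)⁻¹ :=
    sum_pos (fun j _ => inv_pos.mpr (sub_pos.mpr (hd j).2)) univ_nonempty
  have hcharpoly : ((diagonal d + (1 - diagonal d) * C).map Complex.ofReal).charpoly =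
      ∏ j, (X - Polynomial.C (d j : ℂ)) - Polynomial.C (∏ j, (1 - (d j : ℂ))) :=
    (charpoly_map _ Complex.ofRealHom).trans
      (by simp [charpoly_diagonal_add_one_sub_diagonal_mul_cycle d C hC, Polynomial.map_prod])
  obtain ⟨hcount, hkemeny⟩ := roots_prod_X_sub_C_sub_C_prod univ (fun j => (d j : ℂ)) (t := 1)
    (fun j _ => by exact_mod_cast (hd j).2.ne) (by exact_mod_cast hsum_pos.ne') hcharpoly
  refine ⟨hcycle.diagonal_add_one_sub_diagonal_mul fun j => ⟨(hd j).1, (hd j).2.le⟩,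
    hcount, ?_⟩
  have h2S : 2 * ∑ j, (1 - (d j : ℂ))⁻¹ ≠ 0 := by exact_mod_cast (mul_pos two_pos hsum_pos).ne'
  rw [kemeny, eq_div_of_mul_eq h2S hkemeny]
  norm_cast
  ring
end

section
/- Let T be a stochastic matrix of order n with a single essential class, written in block form T = [[S, 1 − S1], [u^T, 1 − 1^T u]] where S is (n−1)×(n−1) with spectral radius less than 1, 1 is the all-ones vector, and u ≥ 0. Then Kemeny's constant satisfies K(T) = trace((I−S)^{−1}) − (1/(1 + u^T (I−S)^{−1} 1)) · trace((I−S)^{−1} 1 u^T (I−S)^{−1}). -/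
open Finset Matrix

/-- One step of the Markov chain: a transition with positive probability. -/
def chainStep {n : ℕ} (T : Matrix (Fin n) (Fin n) ℝ) (i j : Fin n) : Prop := 0 < T i j

/-- `j` is reachable from `i` in the directed graph of `T`. -/
def reaches {n : ℕ} (T : Matrix (Fin n) (Fin n) ℝ) : Fin n → Fin n → Prop :=
  Relation.ReflTransGen (chainStep T)

/-- A state is essential if every state reachable from it can reach it back. -/
def EssentialState {n : ℕ} (T : Matrix (Fin n) (Fin n) ℝ) (i : Fin n) : Prop :=
  ∀ j, reaches T i j → reaches T j i

/-- `T` has a single essential class of indices. -/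
def SingleEssentialClass {n : ℕ} (T : Matrix (Fin n) (Fin n) ℝ) : Prop :=
  (∃ i, EssentialState T i) ∧
    ∀ i j, EssentialState T i → EssentialState T j → reaches T i j

/-!
Put `M = S - 1 uᵀ`. Conjugating `T` by `Q = [[I, 1], [0, 1]]` makes it block lower triangular
with diagonal blocks `M` and `1`, so `charpoly T = charpoly M * (X - 1)` and
`K(T) = ∑ 1 / (1 - λ)` over the eigenvalues `λ` of `M`. This sum is `p'(1) / p(1)` for
`p = charpoly M`, which is `trace (I - M)⁻¹` (differentiate `det (I + X (I - M)⁻¹)` at `0`).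
Finally `I - M = (I - S) + 1 uᵀ` is inverted by the Sherman–Morrison formula. Its denominator
`1 + uᵀ (I - S)⁻¹ 1` cannot vanish: otherwise `w = ((I - S)⁻¹ 1, 0)` would satisfy
`T w = w - 1`, which fails at a minimum of `w` because `T` averages.
-/

open Polynomial

section

variable {m : Type*} [Fintype m] [DecidableEq m]

namespace Matrix

theorem trace_inv_scalar_sub {K : Type*} [Field K] (N : Matrix m m K) {x : K}
    (hx : N.charpoly.eval x ≠ 0) :
    trace (scalar m x - N)⁻¹ = N.charpoly.derivative.eval x / N.charpoly.eval x := by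
  set B := (scalar m x - N)⁻¹
  have hdet : (scalar m x - N).det = N.charpoly.eval x := (eval_charpoly N x).symm
  have hB : B * (scalar m x - N) = 1 := nonsing_inv_mul _ (by rw [hdet]; exact hx.isUnit)
  have hshift : det (1 + (X : K[X]) • B.map C) = C B.det * N.charpoly.comp (X + C x) := by
    have hsplit : scalar m (X + C x) - N.map C = (X : K[X]) • 1 + (scalar m x - N).map C := by
      ext i j
      obtain rfl | hij := eq_or_ne i j <;> simp [*]
      ring
    have hfac : 1 + (X : K[X]) • B.map C = B.map C * (scalar m (X + C x) - N.map C) := by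
      rw [hsplit, Matrix.mul_add, Matrix.mul_smul, Matrix.mul_one, ← Matrix.map_mul, hB,
        Matrix.map_one _ C.map_zero C.map_one, add_comm]
    have hcomp : N.charpoly.comp (X + C x) = (N.map C).charpoly.eval (X + C x) := by
      rw [charpoly_map, eval_map]
      rfl
    rw [hfac, det_mul, hcomp, eval_charpoly, RingHom.map_det]
    rfl
  have hBdet : B.det = (N.charpoly.eval x)⁻¹ := by
    rw [det_nonsing_inv, hdet, Ring.inverse_eq_inv]
  rw [← derivative_det_one_add_X_smul B, hshift, derivative_C_mul, derivative_comp, hBdet]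
  simp [div_eq_inv_mul]

theorem det_add_vecMulVec {K : Type*} [Field K] {A : Matrix m m K} (hA : IsUnit A.det)
    (x y : m → K) : (A + vecMulVec x y).det = A.det * (1 + y ⬝ᵥ A⁻¹ *ᵥ x) := by
  rw [vecMulVec_eq Unit, det_add_replicateCol_mul_replicateRow hA, det_unique (1 + _),
    Matrix.mul_assoc, ← replicateCol_mulVec, add_apply, one_apply_eq,
    replicateRow_mul_replicateCol_apply]

theorem inv_add_vecMulVec {K : Type*} [Field K] {A : Matrix m m K} (hA : IsUnit A.det)
    {x y : m → K} (hc : 1 + y ⬝ᵥ A⁻¹ *ᵥ x ≠ 0) :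
    (A + vecMulVec x y)⁻¹ =
      A⁻¹ - (1 + y ⬝ᵥ A⁻¹ *ᵥ x)⁻¹ • (A⁻¹ * vecMulVec x y * A⁻¹) := by
  set c := 1 + y ⬝ᵥ A⁻¹ *ᵥ x
  have hAA : A * A⁻¹ = 1 := mul_nonsing_inv A hA
  have hrank1 : vecMulVec x y * (A⁻¹ * vecMulVec x y * A⁻¹) =
      (c - 1) • (vecMulVec x y * A⁻¹) := by
    rw [← Matrix.mul_assoc, ← Matrix.mul_assoc, Matrix.mul_assoc _ A⁻¹, mul_vecMulVec,
      vecMulVec_mul_vecMulVec, vecMulVec_smul, Matrix.smul_mul]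
    simp [c]
  have hcoeff : c⁻¹ * (c - 1) = 1 - c⁻¹ := by field_simp
  apply inv_eq_right_inv
  rw [Matrix.add_mul, Matrix.mul_sub, Matrix.mul_sub, hAA, Matrix.mul_smul, Matrix.mul_smul,
    ← Matrix.mul_assoc A, ← Matrix.mul_assoc A, hAA, Matrix.one_mul, hrank1, smul_smul, hcoeff,
    sub_smul, one_smul]
  abel

theorem charpoly_fromBlocks_of_mulVec_one {R : Type*} [CommRing R] {ι : Type*} [Unique ι]
    [Fintype ι] [DecidableEq ι] {A : Matrix m m R} {b r : m → R} {d : R}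
    (hA : A *ᵥ 1 + b = 1) (hr : r ⬝ᵥ 1 + d = 1) :
    (fromBlocks A (replicateCol ι b) (replicateRow ι r) (of fun _ _ => d)).charpoly =
      (A - vecMulVec 1 r).charpoly * (X - 1) := by
  set J : Matrix m ι R := replicateCol ι 1
  have hQ : fromBlocks 1 J 0 1 * fromBlocks 1 (-J) 0 1 = (1 : Matrix (m ⊕ ι) (m ⊕ ι) R) := by
    simp [fromBlocks_multiply, fromBlocks_one]
  have hconj : fromBlocks 1 (-J) 0 1 * fromBlocks A (replicateCol ι b) (replicateRow ι r)
      (of fun _ _ => d) * fromBlocks 1 J 0 1 =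
        fromBlocks (A - vecMulVec 1 r) 0 (replicateRow ι r) 1 := by
    have hJr : J * replicateRow ι r = vecMulVec 1 r := by
      ext i j
      simp [J, mul_apply, vecMulVec_apply]
    have hAJ : A * J + replicateCol ι b = J := by
      rw [← replicateCol_mulVec, ← replicateCol_add, hA]
    have hrJ : replicateRow ι r * J + of (fun _ _ => d) = 1 := by
      ext i j
      rw [Subsingleton.elim i j, add_apply, replicateRow_mul_replicateCol_apply, of_apply,
        one_apply_eq, hr]
    have hcol : (A - vecMulVec 1 r) * J + (replicateCol ι b - J * of fun _ _ => d) = 0 := by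
      have : (A - J * replicateRow ι r) * J + (replicateCol ι b - J * of fun _ _ => d) =
          (A * J + replicateCol ι b) - J * (replicateRow ι r * J + of fun _ _ => d) := by
        rw [Matrix.sub_mul, Matrix.mul_add, Matrix.mul_assoc]
        abel
      rw [← hJr, this, hAJ, hrJ, Matrix.mul_one, sub_self]
    simp only [fromBlocks_multiply, fromBlocks_inj]
    simp only [Matrix.one_mul, Matrix.mul_one, Matrix.zero_mul, Matrix.mul_zero, add_zero,
      zero_add, Matrix.neg_mul, ← sub_eq_add_neg, hJr]
    exact ⟨trivial, hcol, trivial, hrJ⟩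
  calc _ = (fromBlocks 1 J 0 1 * fromBlocks 1 (-J) 0 1 * fromBlocks A (replicateCol ι b)
        (replicateRow ι r) (of fun _ _ => d)).charpoly := by rw [hQ, Matrix.one_mul]
    _ = _ := by
      rw [Matrix.mul_assoc, charpoly_mul_comm, hconj, charpoly_fromBlocks_zero₁₂, charpoly_one,
        Fintype.card_unique, pow_one]

theorem charpoly_eq_of_mulVec_one {R : Type*} [CommRing R] {n : ℕ}
    {T : Matrix (Fin (n + 1)) (Fin (n + 1)) R} (hT : T *ᵥ 1 = 1) :
    T.charpoly = (T.submatrix Fin.castSucc Fin.castSucc -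
      vecMulVec 1 (fun j : Fin n => T (Fin.last n) j.castSucc)).charpoly * (X - 1) := by
  have hlast (i : Fin 1) : Fin.natAdd n i = Fin.last n := Fin.ext (by simp)
  have hrow (i : Fin (n + 1)) :
      ∑ j : Fin n, T i j.castSucc + T i (Fin.last n) = 1 := by
    simpa [mulVec, dotProduct, Fin.sum_univ_castSucc] using congrFun hT i
  have hblocks : reindex finSumFinEquiv.symm finSumFinEquiv.symm T =
      fromBlocks (T.submatrix Fin.castSucc Fin.castSucc)
        (replicateCol (Fin 1) fun i => T i.castSucc (Fin.last n))
        (replicateRow (Fin 1) fun j => T (Fin.last n) j.castSucc)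
        (of fun _ _ => T (Fin.last n) (Fin.last n)) := by
    ext (i | i) (j | j) <;> simp [hlast] <;> rfl
  rw [← charpoly_reindex finSumFinEquiv.symm T, hblocks]
  refine charpoly_fromBlocks_of_mulVec_one ?_ ?_
  · funext i
    simpa [mulVec, dotProduct] using hrow i.castSucc
  · simpa [dotProduct] using hrow (Fin.last n)

end Matrix

theorem isUnit_det_one_sub_of_one_notMem_roots {S : Matrix m m ℝ}
    (h : (1 : ℂ) ∉ (S.map Complex.ofReal).charpoly.roots) :
    IsUnit (1 - S).det := by
  have hS : (S.map Complex.ofReal).charpoly = S.charpoly.map Complex.ofRealHom :=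
    charpoly_map S Complex.ofRealHom
  rw [isUnit_iff_ne_zero]
  contrapose! h
  rw [mem_roots (charpoly_monic _).ne_zero, IsRoot, hS, eval_one_map, eval_charpoly, map_one, h,
    map_zero]

theorem kemeny_eq_trace_inv_one_sub {n : ℕ} {T : Matrix (Fin n) (Fin n) ℝ} {M : Matrix m m ℝ}
    (hT : T.charpoly = M.charpoly * (X - 1)) (hM : IsUnit (1 - M).det) :
    kemeny T = trace (1 - M)⁻¹ := by
  set p := (M.map Complex.ofReal).charpoly
  have hp : p = M.charpoly.map Complex.ofRealHom := charpoly_map M Complex.ofRealHom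
  have hM1 : M.charpoly.eval 1 ≠ 0 := by
    rw [eval_charpoly, map_one]
    exact hM.ne_zero
  have hp1 : p.eval 1 ≠ 0 := by
    rw [hp, eval_one_map, Complex.ofRealHom_eq_coe]
    exact_mod_cast hM1
  have hroots : (T.map Complex.ofReal).charpoly.roots.erase 1 = p.roots := by
    have hTC : (T.map Complex.ofReal).charpoly = T.charpoly.map Complex.ofRealHom :=
      charpoly_map T Complex.ofRealHom
    have hX : (X - 1 : ℝ[X]).map Complex.ofRealHom = X - C 1 := by simp
    rw [hTC, hT, Polynomial.map_mul, ← hp, hX,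
      roots_mul (mul_ne_zero (charpoly_monic _).ne_zero (X_sub_C_ne_zero 1)), roots_X_sub_C,
      add_comm, Multiset.singleton_add, Multiset.erase_cons_head]
  have hsum : (p.roots.map fun z => (1 - z)⁻¹).sum = p.derivative.eval 1 / p.eval 1 := by
    rw [(IsAlgClosed.splits p).eval_derivative_div_eval_of_ne_zero hp1]
    simp only [one_div]
  rw [kemeny, hroots, hsum, hp, derivative_map, eval_one_map, eval_one_map, ← map_div₀,
    ← trace_inv_scalar_sub M hM1, map_one]
  rfl

end

theorem IsStochastic.mulVec_one {n : ℕ} {P : Matrix (Fin n) (Fin n) ℝ} (hP : IsStochastic P) :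
    P *ᵥ 1 = 1 := by
  funext i
  simpa [mulVec, dotProduct] using hP.2 i

theorem IsStochastic.mulVec_ne_sub_one {n : ℕ} {P : Matrix (Fin (n + 1)) (Fin (n + 1)) ℝ}
    (hP : IsStochastic P) (w : Fin (n + 1) → ℝ) : P *ᵥ w ≠ w - 1 := by
  intro h
  obtain ⟨i, -, hmin⟩ := exists_min_image univ w univ_nonempty
  have hle : w i ≤ (P *ᵥ w) i :=
    calc w i = ∑ j, P i j * w i := by rw [← sum_mul, hP.2 i, one_mul]
      _ ≤ ∑ j, P i j * w j :=
        sum_le_sum fun j _ => mul_le_mul_of_nonneg_left (hmin j (mem_univ j)) (hP.1 i j)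
  rw [h, Pi.sub_apply, Pi.one_apply] at hle
  linarith

theorem IsStochastic.one_add_dotProduct_ne_zero {n : ℕ}
    {T : Matrix (Fin (n + 1)) (Fin (n + 1)) ℝ} (hT : IsStochastic T) {x : Fin n → ℝ}
    (hx : (1 - T.submatrix Fin.castSucc Fin.castSucc) *ᵥ x = 1) :
    1 + (fun j => T (Fin.last n) j.castSucc) ⬝ᵥ x ≠ 0 := by
  intro h
  apply hT.mulVec_ne_sub_one (Fin.snoc x 0)
  funext i
  induction i using Fin.lastCases with
  | last =>
    simp only [dotProduct] at h
    simp [mulVec, dotProduct, Fin.sum_univ_castSucc]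
    linarith
  | cast i =>
    have hxi := congrFun hx i
    rw [sub_mulVec, one_mulVec] at hxi
    simp [mulVec, dotProduct, Fin.sum_univ_castSucc] at hxi ⊢
    linarith

theorem kemeny_block_formula_general
    (n : ℕ) (T : Matrix (Fin (n + 1)) (Fin (n + 1)) ℝ)
    (hT : IsStochastic T)
    (S : Matrix (Fin n) (Fin n) ℝ)
    (hS : S = T.submatrix Fin.castSucc Fin.castSucc)
    (u : Fin n → ℝ)
    (hu : u = fun j => T (Fin.last n) (Fin.castSucc j))
    (hspec : ∀ z ∈ (Matrix.charpoly (S.map (Complex.ofReal))).roots, ‖z‖ < 1) :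
    kemeny T = Matrix.trace (1 - S)⁻¹ -
      (1 + u ⬝ᵥ ((1 - S)⁻¹ *ᵥ (fun _ => 1)))⁻¹ *
        Matrix.trace ((1 - S)⁻¹ * Matrix.vecMulVec (fun _ => 1) u * (1 - S)⁻¹) := by
  have hA : IsUnit (1 - S).det :=
    isUnit_det_one_sub_of_one_notMem_roots fun h1 => by simpa using hspec 1 h1
  have hc : 1 + u ⬝ᵥ ((1 - S)⁻¹ *ᵥ 1) ≠ 0 := by
    subst hS hu
    exact hT.one_add_dotProduct_ne_zero (by rw [mulVec_mulVec, mul_nonsing_inv _ hA, one_mulVec])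
  have hfac : T.charpoly = (S - vecMulVec 1 u).charpoly * (X - 1) := by
    subst hS hu
    exact charpoly_eq_of_mulVec_one hT.mulVec_one
  have hM : 1 - (S - vecMulVec 1 u) = (1 - S) + vecMulVec 1 u := by abel
  have hMdet : IsUnit (1 - (S - vecMulVec 1 u)).det := by
    rw [hM, det_add_vecMulVec hA]
    exact hA.mul hc.isUnit
  rw [kemeny_eq_trace_inv_one_sub hfac hMdet, hM, inv_add_vecMulVec hA hc, trace_sub, trace_smul,
    smul_eq_mul]
  rfl

theorem kemeny_block_formula
    (n : ℕ) (T : Matrix (Fin (n + 1)) (Fin (n + 1)) ℝ)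
    (hT : IsStochastic T) (hess : SingleEssentialClass T)
    (S : Matrix (Fin n) (Fin n) ℝ)
    (hS : S = T.submatrix Fin.castSucc Fin.castSucc)
    (u : Fin n → ℝ)
    (hu : u = fun j => T (Fin.last n) (Fin.castSucc j))
    (hspec : ∀ z ∈ (Matrix.charpoly (S.map (Complex.ofReal))).roots, ‖z‖ < 1) :
    kemeny T = Matrix.trace (1 - S)⁻¹ -
      (1 + u ⬝ᵥ ((1 - S)⁻¹ *ᵥ (fun _ => 1)))⁻¹ *
        Matrix.trace ((1 - S)⁻¹ * Matrix.vecMulVec (fun _ => 1) u * (1 - S)⁻¹) :=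
  kemeny_block_formula_general n T hT S hS u hu hspec
end

section
/- Let r_0, ..., r_{n-1} be nonnegative reals with Σ(j+1)r_j > 0, and let 1 ≤ j_1 < j_2 ≤ n−1. Let r̂ be obtained from r by exchanging r_{j_1} and r_{j_2}. Then the difference (Σ_{j=0}^{n-1} j(j+1) r̂_j)/(Σ_{j=0}^{n-1} (j+1) r̂_j) − (Σ_{j=0}^{n-1} j(j+1) r_j)/(Σ_{j=0}^{n-1} (j+1) r_j) is positive, zero, or negative according as (r_{j_1} − r_{j_2})·(j_1 + j_2 + 1 − (Σ_{j=0}^{n-1} j(j+1) r_j)/(Σ_{j=0}^{n-1} (j+1) r_j)) is positive, zero, or negative. -/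
open Finset

theorem swap_ratio_sign
    (n : ℕ) (r : Fin n → ℝ) (hr : ∀ j, 0 ≤ r j)
    (j1 j2 : Fin n) (h1 : 1 ≤ (j1 : ℕ)) (h12 : (j1 : ℕ) < (j2 : ℕ))
    (rh : Fin n → ℝ) (hrh : rh = r ∘ Equiv.swap j1 j2)
    (hden : 0 < ∑ j : Fin n, ((j : ℝ) + 1) * r j)
    (hdenh : 0 < ∑ j : Fin n, ((j : ℝ) + 1) * rh j) :
    let A := (∑ j : Fin n, (j : ℝ) * ((j : ℝ) + 1) * rh j) /
               (∑ j : Fin n, ((j : ℝ) + 1) * rh j) -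
             (∑ j : Fin n, (j : ℝ) * ((j : ℝ) + 1) * r j) /
               (∑ j : Fin n, ((j : ℝ) + 1) * r j)
    let B := (r j1 - r j2) * ((j1 : ℝ) + (j2 : ℝ) + 1 -
             (∑ j : Fin n, (j : ℝ) * ((j : ℝ) + 1) * r j) /
               (∑ j : Fin n, ((j : ℝ) + 1) * r j))
    (0 < A ↔ 0 < B) ∧ (A = 0 ↔ B = 0) ∧ (A < 0 ↔ B < 0) := by
  intro A B
  set σ := Equiv.swap j1 j2 with hσ
  have hne : j1 ≠ j2 := by
    intro h; rw [h] at h12; exact lt_irrefl _ h12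
  have key : ∀ g : Fin n → ℝ,
      ∑ j : Fin n, g j * rh j
        = ∑ j : Fin n, g j * r j + (g j2 - g j1) * (r j1 - r j2) := by
    intro g
    have h1' : ∑ j : Fin n, g j * rh j = ∑ j : Fin n, g (σ j) * r j := by
      rw [hrh]
      calc ∑ j : Fin n, g j * (r ∘ σ) j
          = ∑ j : Fin n, g (σ (σ j)) * r (σ j) := by
            simp [Equiv.swap_apply_self, hσ]
        _ = ∑ j : Fin n, g (σ j) * r j := Equiv.sum_comp σ (fun j => g (σ j) * r j)
    have h2' : ∑ j : Fin n, g (σ j) * r j - ∑ j : Fin n, g j * r j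
        = ∑ j : Fin n, (g (σ j) - g j) * r j := by
      rw [← Finset.sum_sub_distrib]; congr 1; ext j; ring
    have h3' : ∑ j : Fin n, (g (σ j) - g j) * r j
        = ∑ j ∈ ({j1, j2} : Finset (Fin n)), (g (σ j) - g j) * r j := by
      refine (Finset.sum_subset (Finset.subset_univ _) ?_).symm
      intro x _ hx
      simp only [Finset.mem_insert, Finset.mem_singleton, not_or] at hx
      rw [hσ, Equiv.swap_apply_of_ne_of_ne hx.1 hx.2]
      ring
    have h4' : ∑ j ∈ ({j1, j2} : Finset (Fin n)), (g (σ j) - g j) * r j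
        = (g j2 - g j1) * (r j1 - r j2) := by
      rw [Finset.sum_pair hne, hσ, Equiv.swap_apply_left, Equiv.swap_apply_right]
      ring
    linarith [h1', h2', h3', h4']
  set S1 := ∑ j : Fin n, ((j : ℝ) + 1) * r j with hS1
  set S2 := ∑ j : Fin n, (j : ℝ) * ((j : ℝ) + 1) * r j with hS2
  set d := r j1 - r j2 with hd
  set a := (j1 : ℝ) with ha
  set b := (j2 : ℝ) with hb
  have hab : a < b := by rw [ha, hb]; exact_mod_cast h12
  have e1 : ∑ j : Fin n, ((j : ℝ) + 1) * rh j = S1 + (b - a) * d := by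
    have := key (fun j => (j : ℝ) + 1)
    rw [this]; ring
  have e2 : ∑ j : Fin n, (j : ℝ) * ((j : ℝ) + 1) * rh j
      = S2 + (b - a) * (a + b + 1) * d := by
    have := key (fun j => (j : ℝ) * ((j : ℝ) + 1))
    rw [this]; ring
  have hS1h : 0 < S1 + (b - a) * d := by rw [← e1]; exact hdenh
  have hA : A = (b - a) / (S1 + (b - a) * d) * B := by
    show _ - _ = _
    rw [e1, e2]
    show (S2 + (b - a) * (a + b + 1) * d) / (S1 + (b - a) * d) - S2 / S1
      = (b - a) / (S1 + (b - a) * d) * (d * (a + b + 1 - S2 / S1))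
    field_simp
    ring
  have hc : 0 < (b - a) / (S1 + (b - a) * d) := by
    apply div_pos (by linarith) hS1h
  rw [hA]
  refine ⟨?_, ?_, ?_⟩
  · constructor
    · intro h; nlinarith
    · intro h; positivity
  · constructor
    · intro h
      rcases mul_eq_zero.mp h with h' | h'
      · exact absurd h' (ne_of_gt hc)
      · exact h'
    · intro h; rw [h, mul_zero]
  · constructor
    · intro h; nlinarith
    · intro h; exact mul_neg_of_pos_of_neg hc h
end

section
/- Let T be a stochastic matrix of the block form T = [[1, 0^T], [1 − T̂1, T̂]] where T̂ has spectral radius less than 1. Then K(T) = trace((I − T̂)^{−1}), and consequently K(T) ≥ Σ_j 1/(1 − t̂_{jj}), with equality when T̂ is diagonal. -/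
open Finset Matrix

/-! Deleting the absorbing state factors the characteristic polynomial of `T` as
`(X - 1) * χ`, where `χ` is that of `T̂`, so `K(T)` is the sum of `1 / (1 - λ)` over the roots of
`χ`, that is `χ'(1) / χ(1)`; Jacobi's formula for the derivative of a determinant identifies this
with `trace (1 - T̂)⁻¹`. As the spectral radius of `T̂` is below `1`, Gelfand's formula gives
`(1 - T̂)⁻¹ = ∑ₖ T̂ ^ k`, and for nonnegative `T̂` the `j`-th diagonal entry of `T̂ ^ k` is at
least `t̂ⱼⱼ ^ k`, whence `(1 - T̂)⁻¹ⱼⱼ ≥ ∑ₖ t̂ⱼⱼ ^ k = 1 / (1 - t̂ⱼⱼ)`. -/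

open Polynomial Filter

theorem spectrum.summable_pow_of_spectralRadius_lt_one {A : Type*} [NormedRing A]
    [NormedAlgebra ℂ A] [CompleteSpace A] {a : A} (h : spectralRadius ℂ a < 1) :
    Summable (a ^ ·) := by
  obtain ⟨r, hρr, hr1⟩ := ENNReal.lt_iff_exists_nnreal_btwn.mp h
  refine .of_norm_bounded_eventually_nat
    (summable_geometric_of_lt_one r.coe_nonneg (by exact_mod_cast hr1)) ?_
  filter_upwards [(pow_nnnorm_pow_one_div_tendsto_nhds_spectralRadius a).eventually_lt_const hρr,
    eventually_gt_atTop 0] with k hk hk0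
  rw [one_div, ENNReal.rpow_inv_lt_iff (by positivity), ENNReal.rpow_natCast,
    ← ENNReal.coe_pow, ENNReal.coe_lt_coe] at hk
  exact_mod_cast hk.le

variable {ι : Type*} [Fintype ι] [DecidableEq ι]

theorem RingHom.mapMatrix_inv {K L : Type*} [Field K] [Field L] (f : K →+* L)
    (A : Matrix ι ι K) : f.mapMatrix A⁻¹ = (f.mapMatrix A)⁻¹ := by
  rw [Matrix.inv_def, Matrix.inv_def, ← f.map_adjugate, ← f.map_det, Ring.inverse_eq_inv',
    Ring.inverse_eq_inv', RingHom.mapMatrix_apply, RingHom.mapMatrix_apply,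
    Matrix.map_smul' _ _ _ (map_mul f), map_inv₀]

namespace Matrix

theorem charmatrix_submatrix {R m : Type*} [CommRing R] [Fintype m] [DecidableEq m]
    (M : Matrix ι ι R) {e : m → ι} (he : Function.Injective e) :
    (charmatrix M).submatrix e e = charmatrix (M.submatrix e e) := by
  ext i j
  obtain rfl | hij := eq_or_ne i j
  · simp [charmatrix_apply_eq]
  · rw [submatrix_apply, charmatrix_apply_ne _ _ _ (he.ne hij), charmatrix_apply_ne _ _ _ hij,
      submatrix_apply]

theorem charpoly_eq_X_sub_C_mul_charpoly_submatrix_succ {R : Type*} [CommRing R] {n : ℕ}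
    (M : Matrix (Fin (n + 1)) (Fin (n + 1)) R) {c : R} (h : M 0 = Pi.single 0 c) :
    M.charpoly = (X - C c) * (M.submatrix Fin.succ Fin.succ).charpoly := by
  rw [charpoly, det_succ_row_zero, Finset.sum_eq_single 0]
  · simp [charmatrix_apply_eq, h, charpoly, charmatrix_submatrix _ (Fin.succ_injective n)]
  · intro j _ hj
    simp [charmatrix_apply_ne _ _ _ hj.symm, h, hj]
  · simp

theorem eval_derivative_charpoly {R : Type*} [CommRing R] (A : Matrix ι ι R) (x : R)
    (hx : IsUnit (scalar ι x - A).det) :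
    A.charpoly.derivative.eval x = (scalar ι x - A).det * trace (scalar ι x - A)⁻¹ := by
  set B := scalar ι x - A
  have hcomp : A.charpoly.comp (X + C x) = C B.det * det (1 + (X : R[X]) • B⁻¹.map C) := by
    rw [← charpoly_sub_scalar, charpoly, charmatrix, RingHom.map_det, ← det_mul]
    congr 1
    rw [mul_add, mul_one, mul_smul_comm, RingHom.mapMatrix_apply, RingHom.mapMatrix_apply,
      ← Matrix.map_mul, mul_nonsing_inv _ hx, Matrix.map_one _ (map_zero C) (map_one C)]
    ext i j : 1
    obtain rfl | hij := eq_or_ne i j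
    · simp [B, sub_eq_add_neg, add_comm]
    · simp [B, hij]
  have := congrArg (fun p => p.derivative.eval 0) hcomp
  simpa [derivative_comp, derivative_mul, derivative_det_one_add_X_smul] using this

theorem sum_roots_charpoly_inv_sub {K : Type*} [Field K] (A : Matrix ι ι K)
    (hA : A.charpoly.Splits) {x : K} (hx : A.charpoly.eval x ≠ 0) :
    (A.charpoly.roots.map fun z => (x - z)⁻¹).sum = trace (scalar ι x - A)⁻¹ := by
  have hdet : (scalar ι x - A).det ≠ 0 := by rwa [← eval_charpoly]
  have h := hA.eval_derivative_eq_eval_mul_sum hx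
  rw [eval_derivative_charpoly A x hdet.isUnit, eval_charpoly] at h
  simpa only [one_div] using (mul_left_cancel₀ hdet h).symm

attribute [local instance] Matrix.linftyOpNormedRing Matrix.linftyOpNormedAlgebra in
theorem hasSum_pow_of_forall_mem_roots_norm_lt_one (A : Matrix ι ι ℂ)
    (h : ∀ z ∈ A.charpoly.roots, ‖z‖ < 1) : HasSum (A ^ ·) (1 - A)⁻¹ := by
  rcases isEmpty_or_nonempty ι with hι | hι
  · convert hasSum_zero <;> exact Subsingleton.elim _ _
  have hρ : spectralRadius ℂ A < 1 := by
    refine spectrum.spectralRadius_lt_of_forall_lt A fun z hz => ?_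
    have := h z ((mem_roots A.charpoly_monic.ne_zero).2 (mem_spectrum_iff_isRoot_charpoly.1 hz))
    exact_mod_cast this
  have hS := spectrum.summable_pow_of_spectralRadius_lt_one hρ
  rw [inv_eq_right_inv hS.one_sub_mul_tsum_pow]
  exact hS.hasSum

theorem hasSum_pow_of_forall_mem_roots_map_ofReal_norm_lt_one (A : Matrix ι ι ℝ)
    (h : ∀ z ∈ (A.map Complex.ofReal).charpoly.roots, ‖z‖ < 1) : HasSum (A ^ ·) (1 - A)⁻¹ := by
  have hC := (hasSum_pow_of_forall_mem_roots_norm_lt_one _ h).map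
    Complex.reAddGroupHom.mapMatrix (continuous_id.matrix_map Complex.continuous_re)
  have hre : ∀ M : Matrix ι ι ℝ,
      Complex.reAddGroupHom.mapMatrix (Complex.ofRealHom.mapMatrix M) = M := fun M => by
    ext; simp
  rw [show A.map Complex.ofReal = Complex.ofRealHom.mapMatrix A from rfl] at hC
  simpa only [Function.comp_def, ← map_pow, ← map_one Complex.ofRealHom.mapMatrix, ← map_sub,
    ← RingHom.mapMatrix_inv, hre] using hC

theorem apply_self_pow_le_pow_apply_self {α : Type*} [Semiring α] [PartialOrder α]
    [IsOrderedRing α] {A : Matrix ι ι α} (hA : ∀ i j, 0 ≤ A i j) (k : ℕ) (i : ι) :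
    A i i ^ k ≤ (A ^ k) i i := by
  induction k with
  | zero => simp
  | succ k ih =>
    rw [pow_succ, pow_succ, mul_apply]
    calc A i i ^ k * A i i ≤ (A ^ k) i i * A i i := mul_le_mul_of_nonneg_right ih (hA i i)
      _ ≤ ∑ l, (A ^ k) i l * A l i :=
        Finset.single_le_sum (f := fun l => (A ^ k) i l * A l i)
          (fun l _ => mul_nonneg (pow_apply_nonneg hA k i l) (hA l i)) (Finset.mem_univ i)

theorem summable_apply_self_pow_of_summable_pow {A : Matrix ι ι ℝ} (hA : ∀ i j, 0 ≤ A i j)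
    (hs : Summable (A ^ ·)) (i : ι) : Summable (A i i ^ ·) :=
  .of_nonneg_of_le (fun k => pow_nonneg (hA i i) k) (apply_self_pow_le_pow_apply_self hA · i)
    (Pi.summable.1 (Pi.summable.1 hs i) i)

theorem apply_self_lt_one_of_summable_pow {A : Matrix ι ι ℝ} (hA : ∀ i j, 0 ≤ A i j)
    (hs : Summable (A ^ ·)) (i : ι) : A i i < 1 := by
  simpa [abs_of_nonneg (hA i i)] using
    summable_geometric_iff_norm_lt_one.1 (summable_apply_self_pow_of_summable_pow hA hs i)

theorem inv_one_sub_apply_self_le_s15 {A : Matrix ι ι ℝ} (hA : ∀ i j, 0 ≤ A i j)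
    (hs : HasSum (A ^ ·) (1 - A)⁻¹) (i : ι) : (1 - A i i)⁻¹ ≤ (1 - A)⁻¹ i i :=
  hasSum_le (apply_self_pow_le_pow_apply_self hA · i)
    (hasSum_geometric_of_lt_one (hA i i) (apply_self_lt_one_of_summable_pow hA hs.summable i))
    (Pi.hasSum.1 (Pi.hasSum.1 hs i) i)

theorem trace_inv_one_sub_of_isDiag {K : Type*} [Field K] {A : Matrix ι ι K} (h : A.IsDiag)
    (h1 : ∀ i, A i i ≠ 1) : trace (1 - A)⁻¹ = ∑ i, (1 - A i i)⁻¹ := by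
  have hsub : 1 - A = diagonal fun i => 1 - A i i := by
    conv_lhs => rw [← h.diagonal_diag, ← diagonal_one, diagonal_sub]
    rfl
  have hinv : (1 - A) * diagonal (fun i => (1 - A i i)⁻¹) = 1 := by
    rw [hsub, diagonal_mul_diagonal, ← diagonal_one]
    exact congrArg diagonal (funext fun i => mul_inv_cancel₀ (sub_ne_zero.2 (h1 i).symm))
  rw [inv_eq_right_inv hinv, trace_diagonal]

end Matrix

theorem kemeny_eq_trace_inv_one_sub_submatrix_succ {n : ℕ}
    (T : Matrix (Fin (n + 1)) (Fin (n + 1)) ℝ) (hrow : T 0 = Pi.single 0 1)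
    (h1 : ((T.submatrix Fin.succ Fin.succ).map Complex.ofReal).charpoly.eval 1 ≠ 0) :
    kemeny T = trace (1 - T.submatrix Fin.succ Fin.succ)⁻¹ := by
  set A := T.submatrix Fin.succ Fin.succ
  have hrowC : T.map Complex.ofReal 0 = Pi.single 0 1 := by
    funext j
    simp [hrow, Pi.single_apply, apply_ite]
  have hcp : (T.map Complex.ofReal).charpoly = (X - C 1) * (A.map Complex.ofReal).charpoly := by
    rw [charpoly_eq_X_sub_C_mul_charpoly_submatrix_succ _ hrowC, submatrix_map]
  have hroots :
      (T.map Complex.ofReal).charpoly.roots.erase 1 = (A.map Complex.ofReal).charpoly.roots := by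
    rw [hcp, roots_mul ((monic_X_sub_C 1).mul (charpoly_monic _)).ne_zero, roots_X_sub_C,
      Multiset.singleton_add, Multiset.erase_cons_head]
  have hinv : (1 - A.map Complex.ofReal)⁻¹ = (1 - A)⁻¹.map Complex.ofReal := by
    rw [show A.map Complex.ofReal = Complex.ofRealHom.mapMatrix A from rfl,
      ← map_one Complex.ofRealHom.mapMatrix, ← map_sub, ← RingHom.mapMatrix_inv]
    rfl
  rw [kemeny, hroots, sum_roots_charpoly_inv_sub _ (IsAlgClosed.splits _) h1, map_one, hinv]
  exact congrArg Complex.re (AddMonoidHom.map_trace Complex.ofRealHom _).symm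

theorem kemeny_absorbing_block_general
    (n : ℕ) (T : Matrix (Fin (n + 1)) (Fin (n + 1)) ℝ) (hT : IsStochastic T)
    (Th : Matrix (Fin n) (Fin n) ℝ)
    (hTh : Th = T.submatrix Fin.succ Fin.succ)
    (hrow0 : ∀ j : Fin (n + 1), T 0 j = if j = 0 then 1 else 0)
    (hspec : ∀ z ∈ (Matrix.charpoly (Th.map (Complex.ofReal))).roots, ‖z‖ < 1) :
    kemeny T = Matrix.trace (1 - Th)⁻¹ ∧
    (∑ j, (1 - Th j j)⁻¹) ≤ kemeny T ∧
    ((∀ i j, i ≠ j → Th i j = 0) → kemeny T = ∑ j, (1 - Th j j)⁻¹) := by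
  subst hTh
  have hrow : T 0 = Pi.single 0 1 := funext fun j => by rw [hrow0, Pi.single_apply]
  have h1 : ((T.submatrix Fin.succ Fin.succ).map Complex.ofReal).charpoly.eval 1 ≠ 0 :=
    fun h => by simpa using hspec 1 (mem_roots'.2 ⟨(charpoly_monic _).ne_zero, h⟩)
  have hK := kemeny_eq_trace_inv_one_sub_submatrix_succ T hrow h1
  have hnonneg : ∀ i j, 0 ≤ T.submatrix Fin.succ Fin.succ i j := fun i j => hT.1 _ _
  have hs := hasSum_pow_of_forall_mem_roots_map_ofReal_norm_lt_one _ hspec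
  have hlt := apply_self_lt_one_of_summable_pow hnonneg hs.summable
  refine ⟨hK, hK ▸ Finset.sum_le_sum fun j _ => inv_one_sub_apply_self_le_s15 hnonneg hs j,
    fun hdiag => hK.trans (trace_inv_one_sub_of_isDiag hdiag fun j => (hlt j).ne)⟩

theorem kemeny_absorbing_block
    (n : ℕ) (T : Matrix (Fin (n + 1)) (Fin (n + 1)) ℝ) (hT : IsStochastic T)
    (Th : Matrix (Fin n) (Fin n) ℝ)
    (hTh : Th = T.submatrix Fin.succ Fin.succ)
    (hrow0 : ∀ j : Fin (n + 1), T 0 j = if j = 0 then 1 else 0)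
    (hcol0 : ∀ i : Fin n, T i.succ 0 = 1 - ∑ j, Th i j)
    (hspec : ∀ z ∈ (Matrix.charpoly (Th.map (Complex.ofReal))).roots, ‖z‖ < 1) :
    kemeny T = Matrix.trace (1 - Th)⁻¹ ∧
    (∑ j, (1 - Th j j)⁻¹) ≤ kemeny T ∧
    ((∀ i j, i ≠ j → Th i j = 0) → kemeny T = ∑ j, (1 - Th j j)⁻¹) :=
  kemeny_absorbing_block_general n T hT Th hTh hrow0 hspec
end

section
/- For d_1,...,d_n ∈ [0,1) and 1 ≤ k ≤ n−1, setting x_j = 1/(1−d_j), the quantity ((Σ_{j=1}^k x_j)^2 − Σ_{j=1}^k x_j^2)/(2 Σ_{j=1}^k x_j) + Σ_{j=k+1}^n x_j is strictly greater than ((Σ_{j=1}^n x_j)^2 − Σ_{j=1}^n x_j^2)/(2 Σ_{j=1}^n x_j). Hence among completions whose directed graph has a single cycle of length k < n through states 1,...,k, Kemeny's constant strictly exceeds the value attained by a full n-cycle. -/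
open Finset

/-! With `a = ∑_{j ≤ k} x j`, `b = ∑_{j ≤ k} x j ^ 2`, `c = ∑_{j > k} x j` and `e = ∑_{j > k} x j ^ 2`,
clearing the positive denominator `2 a (a + c)` turns the gap between the two sides into
`c (a ^ 2 - b) + a c ^ 2 + a e`, which is positive since `b ≤ a ^ 2` for nonnegative terms. -/

/-- Kemeny's constant of the completion whose directed graph is a cycle through the states of
`s`, with `x j = 1 / (1 - d j)`. -/
noncomputable def cycleKemeny {ι : Type*} (s : Finset ι) (x : ι → ℝ) : ℝ :=
  ((∑ j ∈ s, x j) ^ 2 - ∑ j ∈ s, x j ^ 2) / (2 * ∑ j ∈ s, x j)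

lemma cycleKemeny_split_sub {a b c e : ℝ} (ha : 0 < a) (hc : 0 < c) :
    (a ^ 2 - b) / (2 * a) + c - ((a + c) ^ 2 - (b + e)) / (2 * (a + c)) =
      (c * (a ^ 2 - b) + a * c ^ 2 + a * e) / (2 * a * (a + c)) := by
  field_simp
  ring

lemma cycleKemeny_split_lt {a b c e : ℝ} (ha : 0 < a) (hc : 0 < c) (hb : b ≤ a ^ 2)
    (he : 0 ≤ e) :
    ((a + c) ^ 2 - (b + e)) / (2 * (a + c)) < (a ^ 2 - b) / (2 * a) + c := by
  rw [← sub_pos, cycleKemeny_split_sub ha hc]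
  have hb' : 0 ≤ a ^ 2 - b := sub_nonneg.mpr hb
  positivity

theorem cycleKemeny_union_lt {ι : Type*} [DecidableEq ι] {s t : Finset ι} (hst : Disjoint s t)
    (hs : s.Nonempty) (ht : t.Nonempty) {x : ι → ℝ} (hx : ∀ j ∈ s ∪ t, 0 < x j) :
    cycleKemeny (s ∪ t) x < cycleKemeny s x + ∑ j ∈ t, x j := by
  have hxs : ∀ j ∈ s, 0 < x j := fun j hj => hx j (mem_union_left t hj)
  have hxt : ∀ j ∈ t, 0 < x j := fun j hj => hx j (mem_union_right s hj)
  unfold cycleKemeny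
  rw [sum_union hst, sum_union hst]
  exact cycleKemeny_split_lt (sum_pos hxs hs) (sum_pos hxt ht)
    (sum_sq_le_sq_sum_of_nonneg fun j hj => (hxs j hj).le) (sum_nonneg fun j _ => sq_nonneg _)

theorem short_cycle_exceeds_full_cycle_general
    (n k : ℕ) (hk : 1 ≤ k) (hkn : k ≤ n - 1)
    (d : ℕ → ℝ) (hd : ∀ j, 1 ≤ j → j ≤ n → 0 ≤ d j ∧ d j < 1)
    (x : ℕ → ℝ) (hx : ∀ j, x j = (1 - d j)⁻¹) :
    ((∑ j ∈ Finset.Icc 1 n, x j) ^ 2 - ∑ j ∈ Finset.Icc 1 n, (x j) ^ 2) /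
        (2 * ∑ j ∈ Finset.Icc 1 n, x j) <
      ((∑ j ∈ Finset.Icc 1 k, x j) ^ 2 - ∑ j ∈ Finset.Icc 1 k, (x j) ^ 2) /
        (2 * ∑ j ∈ Finset.Icc 1 k, x j) +
      ∑ j ∈ Finset.Icc (k + 1) n, x j := by
  have hsplit : Icc 1 n = Icc 1 k ∪ Icc (k + 1) n := by
    ext j
    simp only [mem_union, mem_Icc]
    omega
  have hdisj : Disjoint (Icc 1 k) (Icc (k + 1) n) :=
    disjoint_left.mpr fun j hj hj' => by simp only [mem_Icc] at hj hj'; omega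
  have hpos : ∀ j ∈ Icc 1 n, 0 < x j := by
    intro j hj
    obtain ⟨j1, jn⟩ := mem_Icc.mp hj
    rw [hx j, inv_pos, sub_pos]
    exact (hd j j1 jn).2
  change cycleKemeny (Icc 1 n) x < cycleKemeny (Icc 1 k) x + _
  rw [hsplit] at hpos ⊢
  exact cycleKemeny_union_lt hdisj ⟨1, mem_Icc.mpr ⟨le_rfl, hk⟩⟩
    ⟨k + 1, mem_Icc.mpr ⟨le_rfl, by omega⟩⟩ hpos

theorem short_cycle_exceeds_full_cycle
    (n k : ℕ) (hn : 2 ≤ n) (hk : 1 ≤ k) (hkn : k ≤ n - 1)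
    (d : ℕ → ℝ) (hd : ∀ j, 1 ≤ j → j ≤ n → 0 ≤ d j ∧ d j < 1)
    (x : ℕ → ℝ) (hx : ∀ j, x j = (1 - d j)⁻¹) :
    ((∑ j ∈ Finset.Icc 1 n, x j) ^ 2 - ∑ j ∈ Finset.Icc 1 n, (x j) ^ 2) /
        (2 * ∑ j ∈ Finset.Icc 1 n, x j) <
      ((∑ j ∈ Finset.Icc 1 k, x j) ^ 2 - ∑ j ∈ Finset.Icc 1 k, (x j) ^ 2) /
        (2 * ∑ j ∈ Finset.Icc 1 k, x j) +
      ∑ j ∈ Finset.Icc (k + 1) n, x j :=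
  short_cycle_exceeds_full_cycle_general n k hk hkn d hd x hx
end

section
/- Let d_1,...,d_n ∈ [0,1), k ∈ {2,...,n−1}, and set x_j = 1/(1−d_j). Then the quantity Σ_{ℓ=1}^n x_ℓ · (Σ_{j=1}^{k-1} x_j Σ_{ℓ=j}^{n-1} x_ℓ) − Σ_{ℓ=1}^{k-1} x_ℓ · (Σ_{j=1}^{n-1} x_j Σ_{ℓ=j}^{n-1} x_ℓ) is strictly positive. -/
/-!
With `B = ∑_{l<k} x_l`, `P = ∑_{k≤l<n} x_l`, `T_j = ∑_{j≤l<n} x_l`, `A = ∑_{j<k} x_j T_j` and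
`E = ∑_{k≤j<n} x_j T_j`, splitting the index ranges at `k` gives
`(B + P + x_n) A - B (A + E) = (P A - B E) + x_n A`.
Since `T` is antitone, each `T_j` with `j < k` dominates each `T_i` with `i ≥ k`, whence `B E ≤ P A`,
and `x_n A > 0`.
-/

open Finset

variable {R : Type*}

theorem sum_mul_sum_mul_le_of_forall_le {ι : Type*} [CommSemiring R] [PartialOrder R]
    [IsOrderedRing R] {s t : Finset ι} {w f : ι → R} (hs : ∀ i ∈ s, 0 ≤ w i)
    (ht : ∀ j ∈ t, 0 ≤ w j) (hf : ∀ i ∈ s, ∀ j ∈ t, f j ≤ f i) :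
    (∑ i ∈ s, w i) * ∑ j ∈ t, w j * f j ≤ (∑ j ∈ t, w j) * ∑ i ∈ s, w i * f i := by
  rw [sum_mul_sum, sum_mul_sum, sum_comm (s := t)]
  refine sum_le_sum fun i hi => sum_le_sum fun j hj => ?_
  calc w i * (w j * f j) = w i * w j * f j := by ring
    _ ≤ w i * w j * f i := by gcongr; exacts [mul_nonneg (hs i hi) (ht j hj), hf i hi j hj]
    _ = w j * (w i * f i) := by ring

theorem sum_mul_sum_mul_tail_lt [CommRing R] [LinearOrder R] [IsStrictOrderedRing R]
    {x : ℕ → R} {a k n : ℕ} (hak : a < k) (hkn : k ≤ n) (hx : ∀ j ∈ Icc a n, 0 < x j) :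
    (∑ l ∈ Ico a k, x l) * (∑ j ∈ Ico a n, x j * ∑ l ∈ Ico j n, x l) <
      (∑ l ∈ Ico a (n + 1), x l) * ∑ j ∈ Ico a k, x j * ∑ l ∈ Ico j n, x l := by
  set T : ℕ → R := fun j => ∑ l ∈ Ico j n, x l
  have hT_anti : ∀ i j, a ≤ i → i ≤ j → T j ≤ T i := fun i j hai hij =>
    sum_le_sum_of_subset_of_nonneg (Ico_subset_Ico_left hij) fun l hl _ => (hx l (by grind)).le
  have hA : 0 < ∑ j ∈ Ico a k, x j * T j :=
    sum_pos (fun j hj => mul_pos (hx j (by grind))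
      (sum_pos (fun l hl => hx l (by grind)) (nonempty_Ico.2 (by grind)))) (nonempty_Ico.2 hak)
  have hcross : (∑ l ∈ Ico a k, x l) * ∑ j ∈ Ico k n, x j * T j ≤
      (∑ l ∈ Ico k n, x l) * ∑ j ∈ Ico a k, x j * T j :=
    sum_mul_sum_mul_le_of_forall_le (fun i hi => (hx i (by grind)).le)
      (fun j hj => (hx j (by grind)).le) (fun i hi j hj => hT_anti i j (by grind) (by grind))
  rw [← sum_Ico_consecutive _ hak.le hkn, sum_Ico_succ_top (hak.le.trans hkn),
    ← sum_Ico_consecutive _ hak.le hkn]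
  linarith [mul_pos (hx n (by grind)) hA]

theorem key_positivity_general
    (n k : ℕ) (hk2 : 2 ≤ k) (hkn : k ≤ n - 1)
    (d : ℕ → ℝ) (hd : ∀ j, 1 ≤ j → j ≤ n → 0 ≤ d j ∧ d j < 1)
    (x : ℕ → ℝ) (hx : ∀ j, x j = (1 - d j)⁻¹) :
    0 < (∑ l ∈ Finset.Icc 1 n, x l) *
          (∑ j ∈ Finset.Icc 1 (k - 1), x j * ∑ l ∈ Finset.Icc j (n - 1), x l) -
        (∑ l ∈ Finset.Icc 1 (k - 1), x l) *
          (∑ j ∈ Finset.Icc 1 (n - 1), x j * ∑ l ∈ Finset.Icc j (n - 1), x l) := by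
  have hx_pos : ∀ j ∈ Icc 1 n, 0 < x j := fun j hj => by
    rw [mem_Icc] at hj
    rw [hx]
    exact inv_pos.2 (sub_pos.2 (hd j hj.1 hj.2).2)
  have hIco : ∀ a m, 1 ≤ m → Icc a (m - 1) = Ico a m := fun a m hm =>
    Icc_sub_one_right_eq_Ico_of_not_isMin (by simp; omega) a
  simp_rw [sub_pos, hIco _ n (by omega), hIco _ k (by omega), ← Ico_add_one_right_eq_Icc]
  exact sum_mul_sum_mul_tail_lt (by omega) (by omega) hx_pos

theorem key_positivity
    (n k : ℕ) (hn : 3 ≤ n) (hk2 : 2 ≤ k) (hkn : k ≤ n - 1)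
    (d : ℕ → ℝ) (hd : ∀ j, 1 ≤ j → j ≤ n → 0 ≤ d j ∧ d j < 1)
    (x : ℕ → ℝ) (hx : ∀ j, x j = (1 - d j)⁻¹) :
    0 < (∑ l ∈ Finset.Icc 1 n, x l) *
          (∑ j ∈ Finset.Icc 1 (k - 1), x j * ∑ l ∈ Finset.Icc j (n - 1), x l) -
        (∑ l ∈ Finset.Icc 1 (k - 1), x l) *
          (∑ j ∈ Finset.Icc 1 (n - 1), x j * ∑ l ∈ Finset.Icc j (n - 1), x l) :=
  key_positivity_general n k hk2 hkn d hd x hx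
end
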